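/- arXiv:0809.3822 — 5 statements merged into one kernel-verified Lean document; each statement's English description precedes it below -/
import Mathlib

section
/- Let A be a join-semilattice, c ∈ A, and I₁, I₂ subsemilattices with A = I₁ ⊕_c I₂. Then the relation φ_c(x₁, x₂, x) defines a function from I₁ × I₂ to A: for all x₁ ∈ I₁, x₂ ∈ I₂, and x, z ∈ A, if φ_c(x₁, x₂, x) and φ_c(x₁, x₂, z) then x = z. -/
/-! Given `φ_c(x₁, x₂, x)` and `φ_c(x₁, x₂, z)`, both joins `z ∨ c` and `x ∨ c` equal `x₁ ∨ x₂`.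
Applying (Mod2) at `z` and joining with `x` turns the projection equation
`x₁ = (z ∨ x₁) ∧ (c ∨ x₁)` into `x ∨ x₁ = (z ∨ x ∨ x₁) ∧ (c ∨ x ∨ x₁)`, and `z` lies below both
meetands, so `z ≤ x ∨ x₁`; likewise `z ≤ x ∨ x₂`, hence `z ≤ (x ∨ x₁) ∧ (x ∨ x₂) = x`.
By symmetry `x = z`. -/

variable {α : Type*}

/-- `PMeet a b m`: the infimum of `{a, b}` exists and equals `m`. -/
def PMeet [SemilatticeSup α] (a b m : α) : Prop :=
  m ≤ a ∧ m ≤ b ∧ ∀ u, u ≤ a → u ≤ b → u ≤ m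

/-- Partial equation `a ∧ b = a' ∧ b'`: if either infimum exists, so does the
other and they are equal. -/
def MeetEq [SemilatticeSup α] (a b a' b' : α) : Prop :=
  (∀ m, PMeet a b m → PMeet a' b' m) ∧ (∀ m, PMeet a' b' m → PMeet a b m)

/-- Partial equation `(a ∧ b) ∨ y = a' ∧ b'`: if either side exists, so does
the other and they are equal. -/
def MeetJoinEq [SemilatticeSup α] (a b y a' b' : α) : Prop :=
  (∀ m, PMeet a b m → PMeet a' b' (m ⊔ y)) ∧
  (∀ m', PMeet a' b' m' → ∃ m, PMeet a b m ∧ m ⊔ y = m')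

/-- `φ_c(x₁, x₂, x)`: the conjunction of dist, p1, p2 and join. -/
def Phi [SemilatticeSup α] (c x₁ x₂ x : α) : Prop :=
  PMeet (x ⊔ x₁) (x ⊔ x₂) x ∧
  PMeet (x ⊔ x₁) (c ⊔ x₁) x₁ ∧
  PMeet (x ⊔ x₂) (c ⊔ x₂) x₂ ∧
  x₁ ⊔ x₂ = x ⊔ c

/-- A subsemilattice: a subset closed under join. -/
def SubSemilattice [SemilatticeSup α] (I : Set α) : Prop :=
  ∀ a ∈ I, ∀ b ∈ I, a ⊔ b ∈ I

/-- `A = I₁ ⊕_c I₂`: the generalized (c-)direct sum of two subsemilattices. -/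
structure CDirectSum [SemilatticeSup α] (c : α) (I₁ I₂ : Set α) : Prop where
  sub1 : SubSemilattice I₁
  sub2 : SubSemilattice I₂
  mod1 : ∀ x y : α, ∀ x₁ ∈ I₁, ∀ x₂ ∈ I₂, x₁ ⊔ x₂ ≤ x ⊔ c →
    MeetJoinEq (x ⊔ x₁) (x ⊔ x₂) y (x ⊔ y ⊔ x₁) (x ⊔ y ⊔ x₂)
  mod2 : ∀ x y : α, ∀ x₁ ∈ I₁, ∀ x₂ ∈ I₂, x ≤ x₁ ⊔ x₂ →
    MeetJoinEq (x ⊔ x₁) (c ⊔ x₁) y (x ⊔ y ⊔ x₁) (c ⊔ y ⊔ x₁) ∧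
    MeetJoinEq (x ⊔ x₂) (c ⊔ x₂) y (x ⊔ y ⊔ x₂) (c ⊔ y ⊔ x₂)
  abs1 : ∀ x₁ ∈ I₁, ∀ y₁ ∈ I₁, ∀ z₂ ∈ I₂, MeetEq x₁ (y₁ ⊔ z₂) x₁ (y₁ ⊔ c)
  abs2 : ∀ x₂ ∈ I₂, ∀ y₂ ∈ I₂, ∀ z₁ ∈ I₁, MeetEq x₂ (y₂ ⊔ z₁) x₂ (y₂ ⊔ c)
  exi : ∀ x₁ ∈ I₁, ∀ x₂ ∈ I₂, ∃ x : α, Phi c x₁ x₂ x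
  onto : ∀ x : α, ∃ x₁ ∈ I₁, ∃ x₂ ∈ I₂, Phi c x₁ x₂ x

theorem le_sup_of_meetJoinEq [SemilatticeSup α] {c a x z : α}
    (hmod : MeetJoinEq (z ⊔ a) (c ⊔ a) x (z ⊔ x ⊔ a) (c ⊔ x ⊔ a))
    (hmeet : PMeet (z ⊔ a) (c ⊔ a) a) (hz : z ≤ x ⊔ c) : z ≤ x ⊔ a := by
  have hjoin : PMeet (z ⊔ x ⊔ a) (c ⊔ x ⊔ a) (a ⊔ x) := hmod.1 a hmeet
  have hzc : z ≤ c ⊔ x ⊔ a := hz.trans (sup_le (le_sup_right.trans le_sup_left)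
    (le_sup_left.trans le_sup_left))
  rw [sup_comm x a]
  exact hjoin.2.2 z (le_sup_left.trans le_sup_left) hzc

theorem Phi.sup_eq [SemilatticeSup α] {c x₁ x₂ x z : α} (hx : Phi c x₁ x₂ x)
    (hz : Phi c x₁ x₂ z) : z ⊔ c = x ⊔ c :=
  hz.2.2.2.symm.trans hx.2.2.2

theorem CDirectSum.le_of_phi [SemilatticeSup α] {c : α} {I₁ I₂ : Set α}
    (h : CDirectSum c I₁ I₂) {x₁ x₂ x z : α} (h₁ : x₁ ∈ I₁) (h₂ : x₂ ∈ I₂)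
    (hx : Phi c x₁ x₂ x) (hz : Phi c x₁ x₂ z) : z ≤ x := by
  have hzc : z ≤ x ⊔ c := (hx.sup_eq hz).le.trans' le_sup_left
  have hz₁₂ : z ≤ x₁ ⊔ x₂ := hz.2.2.2 ▸ le_sup_left
  obtain ⟨hmod₁, hmod₂⟩ := h.mod2 z x x₁ h₁ x₂ h₂ hz₁₂
  exact hx.1.2.2 z (le_sup_of_meetJoinEq hmod₁ hz.2.1 hzc)
    (le_sup_of_meetJoinEq hmod₂ hz.2.2.1 hzc)

/-- in a c-direct sum, φ_c defines a function: images are unique. -/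
theorem phi_functional [SemilatticeSup α] (c : α) (I₁ I₂ : Set α)
    (h : CDirectSum c I₁ I₂) :
    ∀ x₁ ∈ I₁, ∀ x₂ ∈ I₂, ∀ x z : α,
      Phi c x₁ x₂ x → Phi c x₁ x₂ z → x = z :=
  fun _ h₁ _ h₂ _ _ hx hz => le_antisymm (h.le_of_phi h₁ h₂ hz hx) (h.le_of_phi h₁ h₂ hx hz)
end

section
/- Let A be a join-semilattice, c ∈ A, and I₁, I₂ subsemilattices with A = I₁ ⊕_c I₂. Then the map φ: I₁ × I₂ → A determined by φ_c is injective: if φ_c(x₁, x₂, x) and φ_c(y₁, y₂, x), then x₁ = y₁ and x₂ = y₂. -/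
variable {α : Type*}

/-!
Since `x₁ ⊔ x₂ = x ⊔ c = y₁ ⊔ y₂`, absorption turns `x₁ ≤ y₁ ⊔ y₂` into `x₁ ≤ y₁ ⊔ c` and then
into `x₁ ≤ y₁ ⊔ x₂`. Joining `y₁` to `x = (x ⊔ x₁) ∧ (x ⊔ x₂)` by Mod1 gives `x₁ ≤ x ⊔ y₁`, and the
projection identity `y₁ = (x ⊔ y₁) ∧ (c ⊔ y₁)` then gives `x₁ ≤ y₁`. The other three inequalities follow by
exchanging `(x₁, x₂)` with `(y₁, y₂)`, and `I₁` with `I₂` (the definition of `I₁ ⊕_c I₂` is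
symmetric in them).
-/

section

variable [SemilatticeSup α]

theorem PMeet.comm {a b m : α} (h : PMeet a b m) : PMeet b a m :=
  ⟨h.2.1, h.1, fun u ha hb => h.2.2 u hb ha⟩

theorem PMeet.of_le {a b : α} (h : a ≤ b) : PMeet a b a :=
  ⟨le_rfl, h, fun _ hu _ => hu⟩

theorem MeetEq.le_iff {a b b' : α} (h : MeetEq a b a b') : a ≤ b ↔ a ≤ b' :=
  ⟨fun hb => (h.1 a (.of_le hb)).2.1, fun hb => (h.2 a (.of_le hb)).2.1⟩

theorem MeetJoinEq.comm {a b y a' b' : α} (h : MeetJoinEq a b y a' b') :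
    MeetJoinEq b a y b' a' :=
  ⟨fun m hm => (h.1 m hm.comm).comm,
    fun m' hm' => let ⟨m, hm, e⟩ := h.2 m' hm'.comm; ⟨m, hm.comm, e⟩⟩

theorem Phi.symm {c x₁ x₂ x : α} (h : Phi c x₁ x₂ x) : Phi c x₂ x₁ x :=
  ⟨h.1.comm, h.2.2.1, h.2.1, by rw [sup_comm, h.2.2.2]⟩

namespace CDirectSum

variable {c : α} {I₁ I₂ : Set α}

theorem symm (h : CDirectSum c I₁ I₂) : CDirectSum c I₂ I₁ where
  sub1 := h.sub2
  sub2 := h.sub1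
  mod1 x y x₂ hx₂ x₁ hx₁ hle := (h.mod1 x y x₁ hx₁ x₂ hx₂ (sup_comm x₁ x₂ ▸ hle)).comm
  mod2 x y x₂ hx₂ x₁ hx₁ hle := (h.mod2 x y x₁ hx₁ x₂ hx₂ (sup_comm x₁ x₂ ▸ hle)).symm
  abs1 := h.abs2
  abs2 := h.abs1
  exi x₂ hx₂ x₁ hx₁ := let ⟨x, hx⟩ := h.exi x₁ hx₁ x₂ hx₂; ⟨x, hx.symm⟩
  onto x := let ⟨x₁, hx₁, x₂, hx₂, hx⟩ := h.onto x; ⟨x₂, hx₂, x₁, hx₁, hx.symm⟩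

theorem le_sup_iff_le_sup_c (h : CDirectSum c I₁ I₂) {x₁ y₁ z₂ : α} (hx₁ : x₁ ∈ I₁)
    (hy₁ : y₁ ∈ I₁) (hz₂ : z₂ ∈ I₂) : x₁ ≤ y₁ ⊔ z₂ ↔ x₁ ≤ y₁ ⊔ c :=
  (h.abs1 x₁ hx₁ y₁ hy₁ z₂ hz₂).le_iff

theorem fst_le_of_phi (h : CDirectSum c I₁ I₂) {x₁ x₂ y₁ y₂ x : α} (hx₁ : x₁ ∈ I₁)
    (hx₂ : x₂ ∈ I₂) (hy₁ : y₁ ∈ I₁) (hy₂ : y₂ ∈ I₂) (hx : Phi c x₁ x₂ x)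
    (hy : Phi c y₁ y₂ x) : x₁ ≤ y₁ := by
  have le_y₁y₂ : x₁ ≤ y₁ ⊔ y₂ := hy.2.2.2 ▸ hx.2.2.2 ▸ le_sup_left
  have le_y₁c : x₁ ≤ y₁ ⊔ c := (h.le_sup_iff_le_sup_c hx₁ hy₁ hy₂).1 le_y₁y₂
  have le_y₁x₂ : x₁ ≤ y₁ ⊔ x₂ := (h.le_sup_iff_le_sup_c hx₁ hy₁ hx₂).2 le_y₁c
  have meet_join : PMeet (x ⊔ y₁ ⊔ x₁) (x ⊔ y₁ ⊔ x₂) (x ⊔ y₁) :=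
    (h.mod1 x y₁ x₁ hx₁ x₂ hx₂ hx.2.2.2.le).1 x hx.1
  have le_xy₁ : x₁ ≤ x ⊔ y₁ :=
    meet_join.2.2 x₁ le_sup_right (le_y₁x₂.trans (sup_le_sup_right le_sup_right x₂))
  exact hy.2.1.2.2 x₁ le_xy₁ (sup_comm y₁ c ▸ le_y₁c)

end CDirectSum

end

/-- in a c-direct sum, the map determined by φ_c is injective. -/
theorem phi_injective [SemilatticeSup α] (c : α) (I₁ I₂ : Set α)
    (h : CDirectSum c I₁ I₂) :
    ∀ x₁ ∈ I₁, ∀ x₂ ∈ I₂, ∀ y₁ ∈ I₁, ∀ y₂ ∈ I₂, ∀ x : α,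
      Phi c x₁ x₂ x → Phi c y₁ y₂ x → x₁ = y₁ ∧ x₂ = y₂ := by
  intro x₁ hx₁ x₂ hx₂ y₁ hy₁ y₂ hy₂ x hx hy
  exact ⟨(h.fst_le_of_phi hx₁ hx₂ hy₁ hy₂ hx hy).antisymm
      (h.fst_le_of_phi hy₁ hy₂ hx₁ hx₂ hy hx),
    (h.symm.fst_le_of_phi hx₂ hx₁ hy₂ hy₁ hx.symm hy.symm).antisymm
      (h.symm.fst_le_of_phi hy₂ hy₁ hx₂ hx₁ hy.symm hx.symm)⟩
end

section
/- Let A₁ and A₂ be join-semilattices, A = A₁ × A₂, c = ⟨c', c''⟩ ∈ A, I₁ = {⟨x', c''⟩ : x' ∈ A₁} and I₂ = {⟨c', x''⟩ : x'' ∈ A₂}. Then I₁ and I₂ are subsemilattices of A satisfying the absorption axiom: for all x₁, y₁ ∈ I₁ and z₂ ∈ I₂, x₁ ∧ (y₁∨z₂) = x₁ ∧ (y₁∨c) (i.e., if either infimum exists then both exist and they are equal), and symmetrically with I₁, I₂ interchanged. -/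
variable {α : Type*}

theorem MeetEq.of_le [SemilatticeSup α] {a b b' : α} (hb : b' ≤ b)
    (hlow : ∀ u, u ≤ a → u ≤ b → u ≤ b') : MeetEq a b a b' := by
  constructor
  · rintro m ⟨ma, mb, hm⟩
    exact ⟨ma, hlow m ma mb, fun u ua ub => hm u ua (ub.trans hb)⟩
  · rintro m ⟨ma, mb, hm⟩
    exact ⟨ma, mb.trans hb, fun u ua ub => hm u ua (hlow u ua ub)⟩

section Prod

variable {A₁ A₂ : Type*} [SemilatticeSup A₁] [SemilatticeSup A₂]

theorem subSemilattice_fiber_snd (c'' : A₂) :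
    SubSemilattice {p : A₁ × A₂ | ∃ x' : A₁, p = (x', c'')} := by
  rintro _ ⟨a, rfl⟩ _ ⟨b, rfl⟩
  exact ⟨a ⊔ b, by rw [Prod.mk_sup_mk, sup_idem]⟩

theorem subSemilattice_fiber_fst (c' : A₁) :
    SubSemilattice {p : A₁ × A₂ | ∃ x'' : A₂, p = (c', x'')} := by
  rintro _ ⟨a, rfl⟩ _ ⟨b, rfl⟩
  exact ⟨a ⊔ b, by rw [Prod.mk_sup_mk, sup_idem]⟩

-- Every lower bound of `(a, c)` has second component below `c`, so `d` cannot affect the meet.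
theorem meetEq_mk_sup_snd (a b : A₁) (c d : A₂) :
    MeetEq (a, c) (b, c ⊔ d) (a, c) (b, c) :=
  MeetEq.of_le ⟨le_rfl, le_sup_left⟩ fun _ ⟨_, hc⟩ ⟨hb, _⟩ => ⟨hb, hc⟩

theorem meetEq_mk_sup_fst (a b : A₂) (c d : A₁) :
    MeetEq (c, a) (c ⊔ d, b) (c, a) (c, b) :=
  MeetEq.of_le ⟨le_sup_left, le_rfl⟩ fun _ ⟨hc, _⟩ ⟨_, hb⟩ => ⟨hc, hb⟩

end Prod

/-- in a product A₁ × A₂, the sets I₁ = A₁ × {c''} and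
I₂ = {c'} × A₂ are subsemilattices satisfying the absorption axiom. -/
theorem abs_in_product {A₁ A₂ : Type*} [SemilatticeSup A₁] [SemilatticeSup A₂]
    (c' : A₁) (c'' : A₂) :
    SubSemilattice {p : A₁ × A₂ | ∃ x' : A₁, p = (x', c'')} ∧
    SubSemilattice {p : A₁ × A₂ | ∃ x'' : A₂, p = (c', x'')} ∧
    (∀ x₁ ∈ {p : A₁ × A₂ | ∃ x' : A₁, p = (x', c'')},
      ∀ y₁ ∈ {p : A₁ × A₂ | ∃ x' : A₁, p = (x', c'')},
      ∀ z₂ ∈ {p : A₁ × A₂ | ∃ x'' : A₂, p = (c', x'')},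
        MeetEq x₁ (y₁ ⊔ z₂) x₁ (y₁ ⊔ (c', c''))) ∧
    (∀ x₂ ∈ {p : A₁ × A₂ | ∃ x'' : A₂, p = (c', x'')},
      ∀ y₂ ∈ {p : A₁ × A₂ | ∃ x'' : A₂, p = (c', x'')},
      ∀ z₁ ∈ {p : A₁ × A₂ | ∃ x' : A₁, p = (x', c'')},
        MeetEq x₂ (y₂ ⊔ z₁) x₂ (y₂ ⊔ (c', c''))) := by
  refine ⟨subSemilattice_fiber_snd c'', subSemilattice_fiber_fst c', ?_, ?_⟩
  · rintro _ ⟨a, rfl⟩ _ ⟨b, rfl⟩ _ ⟨d, rfl⟩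
    simpa only [Prod.mk_sup_mk, sup_idem] using meetEq_mk_sup_snd a (b ⊔ c') c'' d
  · rintro _ ⟨a, rfl⟩ _ ⟨b, rfl⟩ _ ⟨d, rfl⟩
    simpa only [Prod.mk_sup_mk, sup_idem] using meetEq_mk_sup_fst a (b ⊔ c'') c' d
end

section
/- Let A be a join-semilattice with greatest element 1, and let I₁, I₂ be subsemilattices of A. Then A = I₁ ⊕_1 I₂ holds if and only if: (exi') x₁ ∨ x₂ = 1 for all x₁ ∈ I₁, x₂ ∈ I₂; (onto') for every x ∈ A there exist x₁ ∈ I₁ and x₂ ∈ I₂ such that the infimum x₁ ∧ x₂ exists and equals x; and (Mod1') for all x₁ ∈ I₁, x₂ ∈ I₂ and all y ∈ A, (x₁ ∧ x₂) ∨ y = (y∨x₁) ∧ (y∨x₂) (both infima existing). -/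
variable {α : Type*}

/-! For `c = ⊤` the conditions `x₁ = (x ∨ x₁) ∧ (⊤ ∨ x₁)` of `φ_⊤` just say `x ≤ x₁`, so
`φ_⊤(x₁, x₂, x)` means `x = x₁ ∧ x₂` and `x₁ ∨ x₂ = ⊤`; this turns (exi) and (onto) into
(exi') and (onto'). In (Mod2) and (Abs) one argument of every meet becomes `⊤`, so they hold
trivially. Finally (Mod1) at `x = x₁ ∧ x₂` is (Mod1'), and conversely (Mod1) for an arbitrary `x`
compares the instances of (Mod1') at `y := x` and at `y := x ∨ y`. -/

section

variable [SemilatticeSup α] {a b a' b' m m' y : α}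

theorem PMeet.unique (h : PMeet a b m) (h' : PMeet a b m') : m = m' :=
  le_antisymm (h'.2.2 m h.1 h.2.1) (h.2.2 m' h'.1 h'.2.1)

theorem pmeet_top_right [OrderTop α] (a : α) : PMeet a ⊤ a :=
  ⟨le_rfl, le_top, fun _ hu _ => hu⟩

theorem pmeet_top_right_iff [OrderTop α] : PMeet a ⊤ m ↔ m = a :=
  ⟨fun h => h.unique (pmeet_top_right a), fun h => h ▸ pmeet_top_right a⟩

theorem MeetEq.refl (a b : α) : MeetEq a b a b :=
  ⟨fun _ h => h, fun _ h => h⟩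

theorem MeetJoinEq.of_pmeet (h : PMeet a b m) (h' : PMeet a' b' (m ⊔ y)) :
    MeetJoinEq a b y a' b' :=
  ⟨fun _ hn => h.unique hn ▸ h', fun _ hn => ⟨m, h, h'.unique hn⟩⟩

theorem phi_top_iff [OrderTop α] {x₁ x₂ x : α} :
    Phi ⊤ x₁ x₂ x ↔ PMeet x₁ x₂ x ∧ x₁ ⊔ x₂ = ⊤ := by
  simp only [Phi, top_sup_eq, sup_top_eq, pmeet_top_right_iff, eq_comm (a := x₁),
    eq_comm (a := x₂), sup_eq_right]
  constructor
  · rintro ⟨hmeet, hx₁, hx₂, hjoin⟩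
    rw [sup_eq_right.2 hx₁, sup_eq_right.2 hx₂] at hmeet
    exact ⟨hmeet, hjoin⟩
  · rintro ⟨hmeet, hjoin⟩
    refine ⟨?_, hmeet.1, hmeet.2.1, hjoin⟩
    rwa [sup_eq_right.2 hmeet.1, sup_eq_right.2 hmeet.2.1]

end

namespace CDirectSum

variable [SemilatticeSup α] [OrderTop α] {I₁ I₂ : Set α} {x₁ x₂ : α}

theorem sup_eq_top (hD : CDirectSum ⊤ I₁ I₂) (hx₁ : x₁ ∈ I₁) (hx₂ : x₂ ∈ I₂) :
    x₁ ⊔ x₂ = ⊤ :=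
  have ⟨_, hphi⟩ := hD.exi x₁ hx₁ x₂ hx₂
  (phi_top_iff.1 hphi).2

theorem exists_pmeet (hD : CDirectSum ⊤ I₁ I₂) (x : α) :
    ∃ x₁ ∈ I₁, ∃ x₂ ∈ I₂, PMeet x₁ x₂ x :=
  have ⟨x₁, hx₁, x₂, hx₂, hphi⟩ := hD.onto x
  ⟨x₁, hx₁, x₂, hx₂, (phi_top_iff.1 hphi).1⟩

theorem exists_pmeet_sup_distrib (hD : CDirectSum ⊤ I₁ I₂) (hx₁ : x₁ ∈ I₁) (hx₂ : x₂ ∈ I₂)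
    (y : α) : ∃ m, PMeet x₁ x₂ m ∧ PMeet (y ⊔ x₁) (y ⊔ x₂) (m ⊔ y) := by
  obtain ⟨m, hphi⟩ := hD.exi x₁ hx₁ x₂ hx₂
  have hm := (phi_top_iff.1 hphi).1
  have hmod := (hD.mod1 m y x₁ hx₁ x₂ hx₂ (by rw [sup_top_eq]; exact le_top)).1 m hphi.1
  rw [sup_assoc m y x₁, sup_assoc m y x₂, sup_eq_right.2 (hm.1.trans le_sup_right),
    sup_eq_right.2 (hm.2.1.trans le_sup_right)] at hmod
  exact ⟨m, hm, hmod⟩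

theorem of_top (h₁ : SubSemilattice I₁) (h₂ : SubSemilattice I₂)
    (hexi : ∀ x₁ ∈ I₁, ∀ x₂ ∈ I₂, x₁ ⊔ x₂ = ⊤)
    (honto : ∀ x, ∃ x₁ ∈ I₁, ∃ x₂ ∈ I₂, PMeet x₁ x₂ x)
    (hmod : ∀ x₁ ∈ I₁, ∀ x₂ ∈ I₂, ∀ y, ∃ m, PMeet x₁ x₂ m ∧ PMeet (y ⊔ x₁) (y ⊔ x₂) (m ⊔ y)) :
    CDirectSum ⊤ I₁ I₂ where
  sub1 := h₁
  sub2 := h₂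
  mod1 x y x₁ hx₁ x₂ hx₂ _ := by
    obtain ⟨m, hm, hmx⟩ := hmod x₁ hx₁ x₂ hx₂ x
    obtain ⟨m', hm', hmxy⟩ := hmod x₁ hx₁ x₂ hx₂ (x ⊔ y)
    rw [hm'.unique hm, ← sup_assoc] at hmxy
    exact .of_pmeet hmx hmxy
  mod2 x y _ _ _ _ _ := by
    simp only [top_sup_eq, sup_right_comm x y]
    exact ⟨.of_pmeet (pmeet_top_right _) (pmeet_top_right _),
      .of_pmeet (pmeet_top_right _) (pmeet_top_right _)⟩
  abs1 _ _ y₁ hy₁ z₂ hz₂ := by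
    rw [hexi y₁ hy₁ z₂ hz₂, sup_top_eq]
    exact .refl _ _
  abs2 _ _ y₂ hy₂ z₁ hz₁ := by
    rw [sup_comm y₂, hexi z₁ hz₁ y₂ hy₂, sup_top_eq]
    exact .refl _ _
  exi x₁ hx₁ x₂ hx₂ :=
    have ⟨m, hm, _⟩ := hmod x₁ hx₁ x₂ hx₂ x₁
    ⟨m, phi_top_iff.2 ⟨hm, hexi x₁ hx₁ x₂ hx₂⟩⟩
  onto x :=
    have ⟨x₁, hx₁, x₂, hx₂, hm⟩ := honto x
    ⟨x₁, hx₁, x₂, hx₂, phi_top_iff.2 ⟨hm, hexi x₁ hx₁ x₂ hx₂⟩⟩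

end CDirectSum

/-- characterization of 1-direct sums in a join-semilattice with
greatest element: exi', onto' and Mod1'. -/
theorem direct_sum_with_top [SemilatticeSup α] [OrderTop α] (I₁ I₂ : Set α)
    (h₁ : SubSemilattice I₁) (h₂ : SubSemilattice I₂) :
    CDirectSum (⊤ : α) I₁ I₂ ↔
      ((∀ x₁ ∈ I₁, ∀ x₂ ∈ I₂, x₁ ⊔ x₂ = (⊤ : α)) ∧
       (∀ x : α, ∃ x₁ ∈ I₁, ∃ x₂ ∈ I₂, PMeet x₁ x₂ x) ∧
       (∀ x₁ ∈ I₁, ∀ x₂ ∈ I₂, ∀ y : α, ∃ m : α,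
          PMeet x₁ x₂ m ∧ PMeet (y ⊔ x₁) (y ⊔ x₂) (m ⊔ y))) :=
  ⟨fun hD => ⟨fun _ hx₁ _ hx₂ => hD.sup_eq_top hx₁ hx₂, hD.exists_pmeet,
      fun _ hx₁ _ hx₂ => hD.exists_pmeet_sup_distrib hx₁ hx₂⟩,
    fun ⟨hexi, honto, hmod⟩ => .of_top h₁ h₂ hexi honto hmod⟩
end

section
/- Let A be a join-semilattice with both 0 and 1, and suppose A = I₁ ⊕_0 I₂ where I₁ and I₂ are ideals with I₁ ∩ I₂ = {0}. Then for every x ∈ A the decomposition x = x₁ ∨ x₂ with x₁ ∈ I₁, x₂ ∈ I₂ is unique, and the maps x ↦ x₁, x ↦ x₂ are join-homomorphisms A → I₁, A → I₂ inducing an isomorphism A ≅ I₁ × I₂. -/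
/-! By absorption, an element of `I₁` lying below `y₁ ∨ y₂` already lies below `y₁`, and
symmetrically for `I₂`; comparing two decompositions of the same element therefore forces
them to agree componentwise. Since `I₁` and `I₂` are closed under joins, the join of the
decompositions of `x` and `y` is the decomposition of `x ∨ y`, so the component maps are
join-homomorphisms, and `a ∨ b` is the unique element with components `a` and `b`. -/

variable {α : Type*}

theorem PMeet.self_of_le [SemilatticeSup α] {a b : α} (hab : a ≤ b) : PMeet a b a :=
  ⟨le_rfl, hab, fun _ hu _ => hu⟩

namespace CDirectSum

section General

variable [SemilatticeSup α] {c : α} {I₁ I₂ : Set α}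

theorem le_sup_of_le_sup_left (h : CDirectSum c I₁ I₂) {x₁ y₁ y₂ : α} (hx₁ : x₁ ∈ I₁)
    (hy₁ : y₁ ∈ I₁) (hy₂ : y₂ ∈ I₂) (hle : x₁ ≤ y₁ ⊔ y₂) : x₁ ≤ y₁ ⊔ c :=
  ((h.abs1 x₁ hx₁ y₁ hy₁ y₂ hy₂).1 x₁ (PMeet.self_of_le hle)).2.1

theorem le_sup_of_le_sup_right (h : CDirectSum c I₁ I₂) {x₂ y₁ y₂ : α} (hx₂ : x₂ ∈ I₂)
    (hy₁ : y₁ ∈ I₁) (hy₂ : y₂ ∈ I₂) (hle : x₂ ≤ y₁ ⊔ y₂) : x₂ ≤ y₂ ⊔ c :=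
  ((h.abs2 x₂ hx₂ y₂ hy₂ y₁ hy₁).1 x₂ (PMeet.self_of_le (sup_comm y₁ y₂ ▸ hle))).2.1

theorem exists_sup_eq_sup (h : CDirectSum c I₁ I₂) (x : α) :
    ∃ x₁ ∈ I₁, ∃ x₂ ∈ I₂, x₁ ⊔ x₂ = x ⊔ c := by
  obtain ⟨x₁, hx₁, x₂, hx₂, hφ⟩ := h.onto x
  exact ⟨x₁, hx₁, x₂, hx₂, hφ.2.2.2⟩

end General

section Zero

variable [SemilatticeSup α] [OrderBot α] {I₁ I₂ : Set α}

theorem sup_eq_sup_iff (h : CDirectSum ⊥ I₁ I₂) {x₁ x₂ y₁ y₂ : α} (hx₁ : x₁ ∈ I₁)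
    (hx₂ : x₂ ∈ I₂) (hy₁ : y₁ ∈ I₁) (hy₂ : y₂ ∈ I₂) :
    x₁ ⊔ x₂ = y₁ ⊔ y₂ ↔ x₁ = y₁ ∧ x₂ = y₂ := by
  refine ⟨fun he => ⟨le_antisymm ?_ ?_, le_antisymm ?_ ?_⟩, fun ⟨rfl, rfl⟩ => rfl⟩
  · simpa using h.le_sup_of_le_sup_left hx₁ hy₁ hy₂ (he ▸ le_sup_left)
  · simpa using h.le_sup_of_le_sup_left hy₁ hx₁ hx₂ (he ▸ le_sup_left)
  · simpa using h.le_sup_of_le_sup_right hx₂ hy₁ hy₂ (he ▸ le_sup_right)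
  · simpa using h.le_sup_of_le_sup_right hy₂ hx₁ hx₂ (he ▸ le_sup_right)

theorem existsUnique_sup_eq (h : CDirectSum ⊥ I₁ I₂) (x : α) :
    ∃! p : α × α, p.1 ∈ I₁ ∧ p.2 ∈ I₂ ∧ p.1 ⊔ p.2 = x := by
  obtain ⟨x₁, hx₁, x₂, hx₂, hx⟩ := h.exists_sup_eq_sup x
  rw [sup_bot_eq] at hx
  refine ⟨(x₁, x₂), ⟨hx₁, hx₂, hx⟩, fun ⟨y₁, y₂⟩ ⟨hy₁, hy₂, hy⟩ => ?_⟩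
  obtain ⟨rfl, rfl⟩ := (h.sup_eq_sup_iff hy₁ hy₂ hx₁ hx₂).1 (hy.trans hx.symm)
  rfl

noncomputable def decompose (h : CDirectSum ⊥ I₁ I₂) (x : α) : α × α :=
  (h.existsUnique_sup_eq x).choose

theorem decompose_spec (h : CDirectSum ⊥ I₁ I₂) (x : α) :
    (h.decompose x).1 ∈ I₁ ∧ (h.decompose x).2 ∈ I₂ ∧ (h.decompose x).1 ⊔ (h.decompose x).2 = x :=
  (h.existsUnique_sup_eq x).choose_spec.1

theorem decompose_sup_eq (h : CDirectSum ⊥ I₁ I₂) {a b : α} (ha : a ∈ I₁) (hb : b ∈ I₂) :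
    h.decompose (a ⊔ b) = (a, b) :=
  ((h.existsUnique_sup_eq (a ⊔ b)).choose_spec.2 (a, b) ⟨ha, hb, rfl⟩).symm

theorem decompose_sup (h : CDirectSum ⊥ I₁ I₂) (x y : α) :
    h.decompose (x ⊔ y) = h.decompose x ⊔ h.decompose y := by
  obtain ⟨hx₁, hx₂, hx⟩ := h.decompose_spec x
  obtain ⟨hy₁, hy₂, hy⟩ := h.decompose_spec y
  have hxy : (h.decompose x ⊔ h.decompose y).1 ⊔ (h.decompose x ⊔ h.decompose y).2 = x ⊔ y := by
    rw [Prod.fst_sup, Prod.snd_sup, sup_sup_sup_comm, hx, hy]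
  rw [← hxy]
  exact h.decompose_sup_eq (h.sub1 _ hx₁ _ hy₁) (h.sub2 _ hx₂ _ hy₂)

end Zero

end CDirectSum

theorem unique_decomposition_general [SemilatticeSup α] [BoundedOrder α]
    (I₁ I₂ : Set α)
    (h : CDirectSum (⊥ : α) I₁ I₂) :
    (∀ x : α, ∃! p : α × α, p.1 ∈ I₁ ∧ p.2 ∈ I₂ ∧ p.1 ⊔ p.2 = x) ∧
    ∃ f g : α → α,
      (∀ x : α, f x ∈ I₁ ∧ g x ∈ I₂ ∧ f x ⊔ g x = x) ∧
      (∀ x y : α, f (x ⊔ y) = f x ⊔ f y ∧ g (x ⊔ y) = g x ⊔ g y) ∧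
      (∀ a ∈ I₁, ∀ b ∈ I₂, ∃! x : α, f x = a ∧ g x = b) := by
  refine ⟨h.existsUnique_sup_eq, fun x => (h.decompose x).1, fun x => (h.decompose x).2,
    h.decompose_spec, fun x y => Prod.ext_iff.1 (h.decompose_sup x y), fun a ha b hb => ?_⟩
  refine ⟨a ⊔ b, Prod.ext_iff.1 (h.decompose_sup_eq ha hb), ?_⟩
  rintro x ⟨rfl, rfl⟩
  exact (h.decompose_spec x).2.2.symm

/-- a 0-direct sum into ideals with trivial intersection yields
unique decompositions, and the component maps are join-homomorphisms inducing
an isomorphism A ≅ I₁ × I₂. -/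
theorem unique_decomposition [SemilatticeSup α] [BoundedOrder α]
    (I₁ I₂ : Set α)
    (hI₁ : (∀ a ∈ I₁, ∀ b : α, b ≤ a → b ∈ I₁) ∧ ∀ a ∈ I₁, ∀ b ∈ I₁, a ⊔ b ∈ I₁)
    (hI₂ : (∀ a ∈ I₂, ∀ b : α, b ≤ a → b ∈ I₂) ∧ ∀ a ∈ I₂, ∀ b ∈ I₂, a ⊔ b ∈ I₂)
    (hcap : I₁ ∩ I₂ = {(⊥ : α)})
    (h : CDirectSum (⊥ : α) I₁ I₂) :
    (∀ x : α, ∃! p : α × α, p.1 ∈ I₁ ∧ p.2 ∈ I₂ ∧ p.1 ⊔ p.2 = x) ∧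
    ∃ f g : α → α,
      (∀ x : α, f x ∈ I₁ ∧ g x ∈ I₂ ∧ f x ⊔ g x = x) ∧
      (∀ x y : α, f (x ⊔ y) = f x ⊔ f y ∧ g (x ⊔ y) = g x ⊔ g y) ∧
      (∀ a ∈ I₁, ∀ b ∈ I₂, ∃! x : α, f x = a ∧ g x = b) :=
  unique_decomposition_general I₁ I₂ h
end
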